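/- For every real z > 0 and every h ∈ (0,1): h·(1 - F_{z-1}(h)) / (c_z·(1-h²)^z) = z · ∫₀¹ (1-t)^{z-1} / √(1 + ((1-h²)/h²)·t) dt. -/

import Mathlib

/-!
Since `Γ(z + 1) = z Γ(z)` and `∫_{-1}^{1} (1 - s²)^(z-1) ds = B(1/2, z) = √π Γ(z) / Γ(z + 1/2)`,
the normalisation gives `F_{z-1}(1) = 1`, so `1 - F_{z-1}(h) = 2 z c_z ∫_h^1 (1 - s²)^(z-1) ds`.
The substitution `s = √(h² + (1 - h²) t)` maps `(0, 1)` onto `(h, 1)` and turns this tail into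
`(1 - h²)^z / 2 · ∫_0^1 (1 - t)^(z-1) / √(h² + (1 - h²) t) dt`; pulling `h` out of the square root
gives the claim. The case `h = 0` of the same substitution computes the Beta integral above.
-/

open Real MeasureTheory Set

theorem eqOn_cpow_mul_one_sub_cpow (a b : ℝ) :
    EqOn (fun x : ℝ => (x : ℂ) ^ ((a : ℂ) - 1) * (1 - (x : ℂ)) ^ ((b : ℂ) - 1))
      (fun x => ((x ^ (a - 1) * (1 - x) ^ (b - 1) : ℝ) : ℂ)) (uIcc 0 1) := by
  intro x hx
  rw [uIcc_of_le zero_le_one] at hx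
  simp only [Complex.ofReal_mul, Complex.ofReal_cpow hx.1, Complex.ofReal_cpow (sub_nonneg.2 hx.2),
    Complex.ofReal_sub, Complex.ofReal_one]

theorem intervalIntegrable_rpow_mul_one_sub_rpow {a b : ℝ} (ha : 0 < a) (hb : 0 < b) :
    IntervalIntegrable (fun x : ℝ => x ^ (a - 1) * (1 - x) ^ (b - 1)) volume 0 1 := by
  have hC := (Complex.betaIntegral_convergent (u := a) (v := b) (by simpa) (by simpa)).congr
    ((eqOn_cpow_mul_one_sub_cpow a b).mono uIoc_subset_uIcc)
  rw [intervalIntegrable_iff_integrableOn_Ioc_of_le zero_le_one] at hC ⊢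
  simpa [IntegrableOn] using hC.re

theorem integral_rpow_mul_one_sub_rpow {a b : ℝ} (ha : 0 < a) (hb : 0 < b) :
    ∫ x in (0:ℝ)..1, x ^ (a - 1) * (1 - x) ^ (b - 1) = Gamma a * Gamma b / Gamma (a + b) := by
  have h := ProbabilityTheory.beta_eq_betaIntegralReal a b ha hb
  rwa [ProbabilityTheory.beta, Complex.betaIntegral,
    intervalIntegral.integral_congr (eqOn_cpow_mul_one_sub_cpow a b),
    intervalIntegral.integral_ofReal, Complex.ofReal_re, eq_comm] at h

section SqrtAffineSubstitution

variable {h : ℝ}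

theorem image_sqrt_affine_Ioo (h0 : 0 ≤ h) (h1 : h < 1) :
    (fun t => √(h ^ 2 + (1 - h ^ 2) * t)) '' Ioo 0 1 = Ioo h 1 := by
  have hh : 0 < 1 - h ^ 2 := by nlinarith
  ext s
  constructor
  · rintro ⟨t, ⟨ht0, ht1⟩, rfl⟩
    constructor
    · calc h = √(h ^ 2) := (sqrt_sq h0).symm
        _ < √(h ^ 2 + (1 - h ^ 2) * t) := sqrt_lt_sqrt (sq_nonneg h) (by nlinarith)
    · calc √(h ^ 2 + (1 - h ^ 2) * t) < √1 := sqrt_lt_sqrt (by positivity) (by nlinarith)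
        _ = 1 := sqrt_one
  · rintro ⟨hs0, hs1⟩
    refine ⟨(s ^ 2 - h ^ 2) / (1 - h ^ 2), ⟨by apply div_pos <;> nlinarith, ?_⟩, ?_⟩
    · rw [div_lt_one hh]; nlinarith
    · dsimp only
      rw [mul_div_cancel₀ _ hh.ne', add_sub_cancel, sqrt_sq (by linarith)]

theorem injOn_sqrt_affine (hh : h ^ 2 < 1) :
    InjOn (fun t => √(h ^ 2 + (1 - h ^ 2) * t)) (Ioo 0 1) := by
  refine StrictMonoOn.injOn fun t ht u _ htu => sqrt_lt_sqrt ?_ ?_ <;> nlinarith [ht.1]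

theorem hasDerivWithinAt_sqrt_affine (hh : h ^ 2 < 1) {t : ℝ} (ht : t ∈ Ioo 0 1) :
    HasDerivWithinAt (fun t => √(h ^ 2 + (1 - h ^ 2) * t))
      ((1 - h ^ 2) / (2 * √(h ^ 2 + (1 - h ^ 2) * t))) (Ioo 0 1) t := by
  have hu : h ^ 2 + (1 - h ^ 2) * t ≠ 0 := by nlinarith [ht.1]
  have := ((hasDerivAt_id t).const_mul (1 - h ^ 2)).const_add (h ^ 2) |>.sqrt hu
  simpa [div_eq_mul_inv, mul_comm] using this.hasDerivWithinAt

theorem eqOn_abs_deriv_sqrt_affine_smul (hh : h ^ 2 < 1) (g : ℝ → ℝ) :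
    EqOn (fun t => |(1 - h ^ 2) / (2 * √(h ^ 2 + (1 - h ^ 2) * t))| • g √(h ^ 2 + (1 - h ^ 2) * t))
      (fun t => (1 - h ^ 2) / (2 * √(h ^ 2 + (1 - h ^ 2) * t)) * g √(h ^ 2 + (1 - h ^ 2) * t))
      (Ioo 0 1) := by
  intro t ht
  have hu : 0 < h ^ 2 + (1 - h ^ 2) * t := by nlinarith [ht.1]
  dsimp only
  rw [smul_eq_mul, abs_of_pos (div_pos (by linarith) (by positivity))]

theorem integral_Ioo_eq_integral_sqrt_affine (h0 : 0 ≤ h) (h1 : h < 1) (g : ℝ → ℝ) :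
    ∫ s in Ioo h 1, g s = ∫ t in Ioo 0 1,
      (1 - h ^ 2) / (2 * √(h ^ 2 + (1 - h ^ 2) * t)) * g √(h ^ 2 + (1 - h ^ 2) * t) := by
  have hh : h ^ 2 < 1 := by nlinarith
  rw [← image_sqrt_affine_Ioo h0 h1, integral_image_eq_integral_abs_deriv_smul measurableSet_Ioo
    (fun t => hasDerivWithinAt_sqrt_affine hh) (injOn_sqrt_affine hh)]
  exact setIntegral_congr_fun measurableSet_Ioo (eqOn_abs_deriv_sqrt_affine_smul hh g)

theorem integrableOn_Ioo_iff_sqrt_affine (h0 : 0 ≤ h) (h1 : h < 1) (g : ℝ → ℝ) :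
    IntegrableOn g (Ioo h 1) ↔ IntegrableOn (fun t =>
      (1 - h ^ 2) / (2 * √(h ^ 2 + (1 - h ^ 2) * t)) * g √(h ^ 2 + (1 - h ^ 2) * t)) (Ioo 0 1) := by
  have hh : h ^ 2 < 1 := by nlinarith
  rw [← image_sqrt_affine_Ioo h0 h1, integrableOn_image_iff_integrableOn_abs_deriv_smul
    measurableSet_Ioo (fun t => hasDerivWithinAt_sqrt_affine hh) (injOn_sqrt_affine hh)]
  exact integrableOn_congr_fun (eqOn_abs_deriv_sqrt_affine_smul hh g) measurableSet_Ioo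

end SqrtAffineSubstitution

theorem one_sub_sq_rpow_sqrt_affine {h t : ℝ} (z : ℝ) (h1 : h ^ 2 < 1) (ht : t ∈ Ioo 0 1) :
    (1 - h ^ 2) / (2 * √(h ^ 2 + (1 - h ^ 2) * t)) * (1 - √(h ^ 2 + (1 - h ^ 2) * t) ^ 2) ^ (z - 1)
      = (1 - h ^ 2) ^ z / 2 * ((1 - t) ^ (z - 1) / √(h ^ 2 + (1 - h ^ 2) * t)) := by
  have hh : 0 < 1 - h ^ 2 := by linarith
  rw [sq_sqrt (by nlinarith [ht.1]), show 1 - (h ^ 2 + (1 - h ^ 2) * t) = (1 - h ^ 2) * (1 - t) by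
    ring, mul_rpow hh.le (by linarith [ht.2]), rpow_sub_one hh.ne']
  field_simp

theorem integral_one_sub_sq_rpow_eq {h : ℝ} (z : ℝ) (h0 : 0 ≤ h) (h1 : h < 1) :
    ∫ s in h..1, (1 - s ^ 2) ^ (z - 1)
      = (1 - h ^ 2) ^ z / 2 * ∫ t in (0:ℝ)..1, (1 - t) ^ (z - 1) / √(h ^ 2 + (1 - h ^ 2) * t) := by
  simp only [intervalIntegral.integral_of_le h1.le, intervalIntegral.integral_of_le zero_le_one,
    integral_Ioc_eq_integral_Ioo, ← integral_const_mul,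
    integral_Ioo_eq_integral_sqrt_affine h0 h1 fun s => (1 - s ^ 2) ^ (z - 1)]
  exact setIntegral_congr_fun measurableSet_Ioo fun t ht =>
    one_sub_sq_rpow_sqrt_affine z (by nlinarith) ht

theorem one_sub_rpow_div_sqrt {t : ℝ} (z : ℝ) (ht : 0 ≤ t) :
    (1 - t) ^ (z - 1) / √t = t ^ ((1 / 2 : ℝ) - 1) * (1 - t) ^ (z - 1) := by
  rw [show (1 / 2 : ℝ) - 1 = -(1 / 2) by norm_num, rpow_neg ht, ← sqrt_eq_rpow, div_eq_inv_mul]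

theorem intervalIntegrable_one_sub_sq_rpow_zero_one {z : ℝ} (hz : 0 < z) :
    IntervalIntegrable (fun s => (1 - s ^ 2) ^ (z - 1)) volume 0 1 := by
  have hbeta := (intervalIntegrable_rpow_mul_one_sub_rpow one_half_pos hz).const_mul (1 / 2)
  rw [intervalIntegrable_iff_integrableOn_Ioo_of_le zero_le_one] at hbeta ⊢
  rw [integrableOn_Ioo_iff_sqrt_affine le_rfl zero_lt_one]
  refine hbeta.congr_fun (fun t ht => ?_) measurableSet_Ioo
  rw [one_sub_sq_rpow_sqrt_affine z (by norm_num) ht]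
  simp [one_sub_rpow_div_sqrt z ht.1.le]

theorem integral_one_sub_sq_rpow_zero_one {z : ℝ} (hz : 0 < z) :
    ∫ s in (0:ℝ)..1, (1 - s ^ 2) ^ (z - 1) = √π * Gamma z / (2 * Gamma (z + 1 / 2)) := by
  have hbeta : ∫ t in (0:ℝ)..1, (1 - t) ^ (z - 1) / √t = √π * Gamma z / Gamma (z + 1 / 2) := by
    rw [intervalIntegral.integral_congr fun t ht => one_sub_rpow_div_sqrt z
      (uIcc_of_le (zero_le_one (α := ℝ)) ▸ ht).1, integral_rpow_mul_one_sub_rpow one_half_pos hz,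
      Gamma_one_half_eq, add_comm]
  rw [integral_one_sub_sq_rpow_eq z le_rfl zero_lt_one]
  simp only [zero_pow two_ne_zero, sub_zero, one_rpow, one_mul, zero_add, hbeta]
  ring

theorem intervalIntegrable_one_sub_sq_rpow {z : ℝ} (hz : 0 < z) :
    IntervalIntegrable (fun s => (1 - s ^ 2) ^ (z - 1)) volume (-1) 1 := by
  have h01 := intervalIntegrable_one_sub_sq_rpow_zero_one hz
  refine IntervalIntegrable.trans ?_ h01
  simpa using ((IntervalIntegrable.iff_comp_neg (by finiteness)).1 h01).symm

theorem integral_one_sub_sq_rpow {z : ℝ} (hz : 0 < z) :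
    ∫ s in (-1:ℝ)..1, (1 - s ^ 2) ^ (z - 1) = √π * Gamma z / Gamma (z + 1 / 2) := by
  have heven : ∫ s in (-1:ℝ)..0, (1 - s ^ 2) ^ (z - 1) = ∫ s in (0:ℝ)..1, (1 - s ^ 2) ^ (z - 1) := by
    have := intervalIntegral.integral_comp_neg (a := 0) (b := 1) fun s : ℝ => (1 - s ^ 2) ^ (z - 1)
    simp only [neg_sq, neg_zero] at this
    exact this.symm
  have hint := intervalIntegrable_one_sub_sq_rpow hz
  rw [← intervalIntegral.integral_add_adjacent_intervals (b := 0)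
      (hint.mono_set (uIcc_subset_uIcc_left (by norm_num [mem_uIcc])))
      (hint.mono_set (uIcc_subset_uIcc_right (by norm_num [mem_uIcc]))),
    heven, integral_one_sub_sq_rpow_zero_one hz]
  ring

theorem F_ratio_integral_repr (z h : ℝ) (hz : 0 < z) (hh : h ∈ Set.Ioo (0:ℝ) 1)
    (c : ℝ) (hc : c = Real.Gamma (z + 1/2) / (2 * Real.sqrt π * Real.Gamma (z + 1)))
    (F : ℝ → ℝ) (hF : ∀ t ∈ Set.Icc (-1:ℝ) 1,
      F t = 2 * z * c * ∫ s in (-1:ℝ)..t, (1 - s^2) ^ (z - 1)) :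
    h * (1 - F h) / (c * (1 - h^2) ^ z) =
      z * ∫ t in (0:ℝ)..1, (1 - t) ^ (z - 1) / Real.sqrt (1 + ((1 - h^2) / h^2) * t) := by
  obtain ⟨h0, h1⟩ := hh
  have hΓ := Gamma_pos_of_pos (by linarith : 0 < z + 1 / 2)
  have hint := intervalIntegrable_one_sub_sq_rpow hz
  have hnorm : 2 * z * c * ∫ s in (-1:ℝ)..1, (1 - s ^ 2) ^ (z - 1) = 1 := by
    rw [integral_one_sub_sq_rpow hz, hc, Gamma_add_one hz.ne']
    field_simp
  have htail : 1 - F h = 2 * z * c * ∫ s in h..1, (1 - s ^ 2) ^ (z - 1) := by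
    rw [hF h ⟨by linarith, h1.le⟩, ← intervalIntegral.integral_interval_sub_left hint
      (hint.mono_set (uIcc_subset_uIcc_left (mem_uIcc_of_le (by linarith) h1.le)))]
    linear_combination -hnorm
  have hrescale : ∀ t, (1 - t) ^ (z - 1) / √(h ^ 2 + (1 - h ^ 2) * t)
      = h⁻¹ * ((1 - t) ^ (z - 1) / √(1 + (1 - h ^ 2) / h ^ 2 * t)) := fun t => by
    rw [show h ^ 2 + (1 - h ^ 2) * t = h ^ 2 * (1 + (1 - h ^ 2) / h ^ 2 * t) by field_simp,
      sqrt_mul (sq_nonneg h), sqrt_sq h0.le]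
    field_simp
  have hc0 : c ≠ 0 := by rw [hc]; positivity
  have hpow : (1 - h ^ 2) ^ z ≠ 0 := (rpow_pos_of_pos (by nlinarith) z).ne'
  rw [htail, integral_one_sub_sq_rpow_eq z h0.le h1, funext hrescale,
    intervalIntegral.integral_const_mul]
  field_simp
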